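/- arXiv:1703.04427 — 2 statements merged into one kernel-verified Lean document; each statement's English description precedes it below -/
import Mathlib

section
/- Suppose a cop-win graph G has rank cardinality vector (1, m, k, 1) for some positive integers m, k (so G has corner rank 4, one vertex of rank 4, and one vertex of rank 1). Then the subgraph of G induced on the set X_3 of vertices of corner rank 3 is connected. -/
namespace CopsRobbers

variable {V : Type*}

/-- The closed neighborhood of `v` within the vertex set `S` (graphs are reflexive,
so `v` itself belongs to its closed neighborhood). -/
def closedNbhd (G : SimpleGraph V) (S : Set V) (v : V) : Set V :=
  {u | u ∈ S ∧ (u = v ∨ G.Adj u v)}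

/-- `v` is a strict corner of the subgraph induced on `S`: some other vertex `w ∈ S`
strictly corners `v`, i.e. `N[v] ⊊ N[w]` within `S`. -/
def StrictCorner (G : SimpleGraph V) (S : Set V) (v : V) : Prop :=
  v ∈ S ∧ ∃ w ∈ S, w ≠ v ∧ closedNbhd G S v ⊂ closedNbhd G S w

/-- The remaining vertex sets of the corner ranking procedure (0-indexed auxiliary
version): at each step all current strict corners are removed. -/
def stageAux (G : SimpleGraph V) : ℕ → Set V
  | 0 => Set.univ
  | n + 1 => stageAux G n \ {v | StrictCorner G (stageAux G n) v}

/-- `stage G k` is the vertex set of `G^(k)` (for `k ≥ 1`), so `stage G 1 = V(G)`. -/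
def stage (G : SimpleGraph V) (k : ℕ) : Set V := stageAux G (k - 1)

/-- The corner rank of a vertex: the least `k ≥ 1` such that `v` is a strict corner
of `G^(k)`, or `G^(k)` is a clique still containing `v`; and `⊤` (that is, `∞`) if
there is no such `k`. -/
noncomputable def cornerRank (G : SimpleGraph V) (v : V) : ℕ∞ :=
  sInf {k : ℕ∞ | ∃ n : ℕ, k = (n : ℕ∞) ∧ 1 ≤ n ∧
    (StrictCorner G (stage G n) v ∨ (G.IsClique (stage G n) ∧ v ∈ stage G n))}

/-- The corner rank of a graph: the largest corner rank of a vertex. -/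
noncomputable def graphRank (G : SimpleGraph V) : ℕ∞ := ⨆ v, cornerRank G v

/-- A graph is cop-win iff every vertex has finite corner rank. -/
def CopWin (G : SimpleGraph V) : Prop := ∀ v, cornerRank G v ≠ ⊤

/-- `v` dominates the set `S`: `v` is (reflexively) adjacent to every vertex of `S`. -/
def Dominates (G : SimpleGraph V) (v : V) (S : Set V) : Prop :=
  ∀ u ∈ S, u = v ∨ G.Adj v u

/-- A cop-win graph of corner rank `α ≥ 2` is `tp1` if some vertex of corner rank `α`
dominates the vertex set of `G^(α-1)`. -/
def Tp1 (G : SimpleGraph V) : Prop :=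
  ∃ α : ℕ, 2 ≤ α ∧ graphRank G = (α : ℕ∞) ∧
    ∃ v, cornerRank G v = (α : ℕ∞) ∧ Dominates G v (stage G (α - 1))

/-- `G` realizes the vector `(x_α, …, x_1)` (written as the list `[x_α, …, x_1]`):
`G` is cop-win of corner rank `α` and for each `k`, `x_k` is the number of vertices
of corner rank `k`. -/
def Realizes (G : SimpleGraph V) (x : List ℕ) : Prop :=
  CopWin G ∧ graphRank G = (x.length : ℕ∞) ∧
  ∀ i : Fin x.length,
    x.get i = {v | cornerRank G v = ((x.length - (i : ℕ) : ℕ) : ℕ∞)}.ncard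

/-- `G` r-realizes `x` (for `r ∈ {0,1}`): `G` realizes `x` and `G` is tp-r. -/
def RRealizes (G : SimpleGraph V) (r : ℕ) (x : List ℕ) : Prop :=
  Realizes G x ∧ (Tp1 G ↔ r = 1)

/-- A vector is realizable if it is the rank cardinality vector of some finite cop-win graph. -/
def Realizable (x : List ℕ) : Prop :=
  ∃ (W : Type) (_ : Fintype W) (G : SimpleGraph W), Realizes G x

/-- A vector is r-realizable if some finite tp-r cop-win graph realizes it. -/
def RRealizable (r : ℕ) (x : List ℕ) : Prop :=
  ∃ (W : Type) (_ : Fintype W) (G : SimpleGraph W), RRealizes G r x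

open Classical in
/-- The capture time of a cop-win graph: `cr(G) - r(G)`. -/
noncomputable def captureTime (G : SimpleGraph V) : ℕ :=
  (graphRank G).toNat - (if Tp1 G then 1 else 0)

/-!
Let `u` be the vertex of rank 4 and `a` the vertex of rank 1, so that `G^(2) = G - a` and
`G^(3) = X₃ ∪ {u}`. In `G^(3)` every `v ∈ X₃` is strictly cornered by `u`; as `v` is no strict
corner of `G^(2)`, it has a neighbour `w ∈ X₂` outside `N[u]`. In `G^(2)` the neighbourhood of `w`
lies in that of some `t` which is not a strict corner; `t ≠ u` because `w ∈ N[t]`, so `t ∈ X₃`, and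
`v ∈ N[w] ⊆ N[t]`. Every vertex of `X₂` is adjacent to `a` (otherwise it would already be a strict
corner of `G`), so `X₂` lies in the neighbourhood of a vertex `b` cornering `a`, hence in that of a
non-corner `c` of `G^(2)` dominating `b`. Again `c ∈ X₃`, and `c ∈ N[w] ⊆ N[t]`: every vertex of
`X₃` is joined to `c` by a path of length at most two inside `X₃`.
-/

/-- The paper's `X_k`. -/
def rankSet (G : SimpleGraph V) (k : ℕ∞) : Set V := {v | cornerRank G v = k}

variable {G : SimpleGraph V} {S T : Set V} {u v w a : V}

lemma mem_closedNbhd_comm (hv : v ∈ S) (hw : w ∈ S) :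
    v ∈ closedNbhd G S w ↔ w ∈ closedNbhd G S v :=
  ⟨fun h => ⟨hw, h.2.imp Eq.symm G.adj_symm⟩, fun h => ⟨hv, h.2.imp Eq.symm G.adj_symm⟩⟩

lemma exists_closedNbhd_subset_not_strictCorner [Finite V] (hv : v ∈ S) :
    ∃ t ∈ S, closedNbhd G S v ⊆ closedNbhd G S t ∧ ¬ StrictCorner G S t := by
  obtain ⟨t, ⟨htS, hvt⟩, hmax⟩ := Set.Finite.exists_maximalFor (closedNbhd G S)
    {t | t ∈ S ∧ closedNbhd G S v ⊆ closedNbhd G S t} (Set.toFinite _) ⟨v, hv, le_rfl⟩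
  refine ⟨t, htS, hvt, fun ⟨_, t', ht'S, _, htt'⟩ => htt'.not_subset ?_⟩
  exact hmax ⟨ht'S, hvt.trans htt'.subset⟩ htt'.subset

lemma strictCorner_of_subset (hTS : T ⊆ S) (hv : v ∈ S) (hw : w ∈ T)
    (hvw : closedNbhd G T v ⊂ closedNbhd G T w)
    (hout : closedNbhd G S v \ T ⊆ closedNbhd G S w) : StrictCorner G S v := by
  have hsub : closedNbhd G S v ⊆ closedNbhd G S w := fun x hx => by
    by_cases hxT : x ∈ T
    · exact ⟨hTS hxT, (hvw.subset ⟨hxT, hx.2⟩).2⟩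
    · exact hout ⟨hx, hxT⟩
  obtain ⟨z, ⟨hzT, hzw⟩, hzv⟩ := Set.exists_of_ssubset hvw
  refine ⟨hv, w, hTS hw, fun hwv => hvw.ne (hwv ▸ rfl), ?_⟩
  exact (Set.ssubset_iff_of_subset hsub).mpr ⟨z, ⟨hTS hzT, hzw⟩, fun hz => hzv ⟨hzT, hz.2⟩⟩

lemma induce_connected_of_forall_exists_mem_closedNbhd {c : V} (hc : c ∈ S)
    (h : ∀ v ∈ S, ∃ t, v ∈ closedNbhd G S t ∧ t ∈ closedNbhd G S c) :
    (G.induce S).Connected := by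
  have reach : ∀ {x y : V} (hy : y ∈ S) (hxy : x ∈ closedNbhd G S y),
      (G.induce S).Reachable ⟨x, hxy.1⟩ ⟨y, hy⟩ := by
    rintro x y hy ⟨hx, rfl | hadj⟩
    exacts [.rfl, SimpleGraph.Adj.reachable hadj]
  refine (SimpleGraph.connected_iff_exists_forall_reachable _).mpr ⟨⟨c, hc⟩, fun ⟨v, hv⟩ => ?_⟩
  obtain ⟨t, hvt, htc⟩ := h v hv
  exact ((reach htc.1 hvt).trans (reach hc htc)).symm

lemma stage_antitone : Antitone (stage G) :=
  fun _ _ h =>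
    antitone_nat_of_succ_le (f := stageAux G) (fun _ => Set.sdiff_subset)
      (Nat.sub_le_sub_right h 1)

lemma stage_succ {n : ℕ} (hn : 1 ≤ n) :
    stage G (n + 1) = stage G n \ {v | StrictCorner G (stage G n) v} := by
  obtain ⟨m, rfl⟩ := Nat.exists_eq_add_of_le' hn
  rfl

lemma cornerRank_le_of_strictCorner {n : ℕ} (hn : 1 ≤ n) (h : StrictCorner G (stage G n) v) :
    cornerRank G v ≤ n :=
  sInf_le ⟨n, rfl, hn, Or.inl h⟩

lemma cornerRank_le_of_isClique {n : ℕ} (hn : 1 ≤ n) (h : G.IsClique (stage G n))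
    (hv : v ∈ stage G n) : cornerRank G v ≤ n :=
  sInf_le ⟨n, rfl, hn, Or.inr ⟨h, hv⟩⟩

lemma one_le_cornerRank : 1 ≤ cornerRank G v :=
  le_sInf fun _ ⟨_, hk, hn, _⟩ => hk ▸ Nat.one_le_cast.mpr hn

lemma cornerRank_spec {n : ℕ} (h : cornerRank G v = n) :
    1 ≤ n ∧ (StrictCorner G (stage G n) v ∨ (G.IsClique (stage G n) ∧ v ∈ stage G n)) := by
  have hne : {k : ℕ∞ | ∃ n : ℕ, k = (n : ℕ∞) ∧ 1 ≤ n ∧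
      (StrictCorner G (stage G n) v ∨ (G.IsClique (stage G n) ∧ v ∈ stage G n))}.Nonempty := by
    by_contra hempty
    rw [Set.not_nonempty_iff_eq_empty] at hempty
    simp [cornerRank, hempty] at h
  obtain ⟨n', hn', hspec⟩ := csInf_mem hne
  obtain rfl : n = n' := by exact_mod_cast h.symm.trans hn'
  exact hspec

lemma mem_stage_of_le_cornerRank : ∀ {n : ℕ}, (n : ℕ∞) ≤ cornerRank G v → v ∈ stage G n
  | 0, _ | 1, _ => Set.mem_univ v
  | n + 2, h => by
    have hlt : ((n + 1 : ℕ) : ℕ∞) < cornerRank G v := lt_of_lt_of_le (by norm_cast; omega) h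
    exact ⟨mem_stage_of_le_cornerRank hlt.le,
      fun hsc => (cornerRank_le_of_strictCorner (n := n + 1) (by omega) hsc).not_gt hlt⟩

lemma not_strictCorner_of_lt_cornerRank {j : ℕ} (hj : 1 ≤ j) (h : (j : ℕ∞) < cornerRank G v) :
    ¬ StrictCorner G (stage G j) v :=
  fun hsc => (cornerRank_le_of_strictCorner hj hsc).not_gt h

lemma not_isClique_stage {j : ℕ} (hj : 1 ≤ j) (h : (j : ℕ∞) < cornerRank G u) :
    ¬ G.IsClique (stage G j) :=
  fun hcl => (cornerRank_le_of_isClique hj hcl (mem_stage_of_le_cornerRank h.le)).not_gt h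

lemma strictCorner_of_cornerRank_lt {n : ℕ} (hv : cornerRank G v = n)
    (h : (n : ℕ∞) < cornerRank G u) : StrictCorner G (stage G n) v := by
  obtain ⟨hn, hsc | ⟨hcl, -⟩⟩ := cornerRank_spec hv
  · exact hsc
  · exact absurd hcl (not_isClique_stage hn h)

lemma mem_stage_iff {j : ℕ} (hj : (j : ℕ∞) ≤ cornerRank G u) :
    v ∈ stage G j ↔ (j : ℕ∞) ≤ cornerRank G v := by
  refine ⟨fun hv => ?_, mem_stage_of_le_cornerRank⟩
  by_contra! hlt
  obtain ⟨n, hn⟩ := ENat.ne_top_iff_exists.mp (hlt.trans_le le_top).ne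
  rw [← hn] at hlt
  have hnj : n < j := by exact_mod_cast hlt
  have hv' : v ∈ stage G (n + 1) := stage_antitone hnj hv
  obtain ⟨hn1, hsc | ⟨hcl, -⟩⟩ := cornerRank_spec hn.symm
  · rw [stage_succ hn1] at hv'
    exact hv'.2 hsc
  · exact not_isClique_stage hn1 ((Nat.cast_lt.mpr hnj).trans_le hj) hcl

lemma lt_cornerRank_of_not_strictCorner {j : ℕ} (hju : (j : ℕ∞) < cornerRank G u)
    (hv : v ∈ stage G j) (hnsc : ¬ StrictCorner G (stage G j) v) : (j : ℕ∞) < cornerRank G v := by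
  refine lt_of_le_of_ne ((mem_stage_iff hju.le).mp hv) fun hjv => hnsc ?_
  exact strictCorner_of_cornerRank_lt hjv.symm hju

lemma mem_stage_two_iff_ne (hu4 : cornerRank G u = 4) (ha : ∀ v, cornerRank G v = 1 ↔ v = a) :
    v ∈ stage G 2 ↔ v ≠ a := by
  rw [mem_stage_iff (j := 2) (by rw [hu4]; decide), Ne, ← ha v, Nat.cast_ofNat,
    ← one_add_one_eq_two, ENat.add_one_le_iff ENat.one_ne_top]
  exact one_le_cornerRank.lt_iff_ne'

lemma cornerRank_eq_three_of_not_strictCorner (hu : ∀ v, cornerRank G v = 4 ↔ v = u)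
    (hle : ∀ v, cornerRank G v ≤ 4) {t : V} (ht : t ∈ stage G 2)
    (htnsc : ¬ StrictCorner G (stage G 2) t) (hwt : w ∈ closedNbhd G (stage G 2) t)
    (hwu : w ∉ closedNbhd G (stage G 2) u) : cornerRank G t = 3 := by
  have h2t := lt_cornerRank_of_not_strictCorner (j := 2) (by rw [(hu u).mpr rfl]; decide) ht htnsc
  have htu : cornerRank G t ≠ 4 := fun h => hwu ((hu t).mp h ▸ hwt)
  have hlet := hle t
  generalize cornerRank G t = r at *
  lift r to ℕ using (hlet.trans_lt (by decide)).ne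
  norm_cast at *
  omega

lemma closedNbhd_stage_three_ssubset [Finite V] (hu : ∀ v, cornerRank G v = 4 ↔ v = u)
    (hle : ∀ v, cornerRank G v ≤ 4) (hv : cornerRank G v = 3) :
    closedNbhd G (stage G 3) v ⊂ closedNbhd G (stage G 3) u := by
  have hu4 : cornerRank G u = 4 := (hu u).mpr rfl
  obtain ⟨-, w, hw, -, hvw⟩ :=
    strictCorner_of_cornerRank_lt (n := 3) (by simpa using hv) (by rw [hu4]; decide)
  obtain ⟨t, ht, hwt, htnsc⟩ := exists_closedNbhd_subset_not_strictCorner hw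
  have h3t := lt_cornerRank_of_not_strictCorner (j := 3) (by rw [hu4]; decide) ht htnsc
  obtain rfl : t = u := (hu t).mp (le_antisymm (hle t) (by
    rw [← three_add_one_eq_four, ENat.add_one_le_iff (by decide)]
    exact_mod_cast h3t))
  exact hvw.trans_subset hwt

lemma exists_adj_cornerRank_two_not_mem_closedNbhd [Finite V]
    (hu : ∀ v, cornerRank G v = 4 ↔ v = u) (hle : ∀ v, cornerRank G v ≤ 4)
    (hv : cornerRank G v = 3) :
    ∃ w, cornerRank G w = 2 ∧ G.Adj w v ∧ w ∉ closedNbhd G (stage G 2) u := by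
  have hu4 : cornerRank G u = 4 := (hu u).mpr rfl
  by_contra! hw
  have hv3 : v ∈ stage G 3 := mem_stage_of_le_cornerRank (by simp [hv])
  refine not_strictCorner_of_lt_cornerRank (G := G) (v := v) (j := 2) (by decide)
    (by norm_num [hv]) ?_
  refine strictCorner_of_subset (stage_antitone (by decide)) (stage_antitone (by decide) hv3)
    (mem_stage_of_le_cornerRank (by norm_num [hu4])) (closedNbhd_stage_three_ssubset hu hle hv)
    ?_
  rintro x ⟨⟨hx2, rfl | hxv⟩, hx3⟩
  · exact (hx3 hv3).elim
  · refine hw x (le_antisymm ?_ ?_) hxv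
    · have h3 : cornerRank G x < 3 :=
        not_le.mp fun h => hx3 (mem_stage_of_le_cornerRank (by simpa using h))
      exact (ENat.lt_add_one_iff (by decide)).mp (by rwa [two_add_one_eq_three])
    · simpa using (mem_stage_iff (j := 2) (by rw [hu4]; decide)).mp hx2

lemma adj_of_cornerRank_eq_two (hu4 : cornerRank G u = 4) (ha : ∀ v, cornerRank G v = 1 ↔ v = a)
    (hw : cornerRank G w = 2) : G.Adj a w := by
  by_contra haw
  obtain ⟨hw2, t, ht, -, hwt⟩ :=
    strictCorner_of_cornerRank_lt (n := 2) (by simpa using hw) (by rw [hu4]; decide)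
  refine not_strictCorner_of_lt_cornerRank (G := G) (v := w) (j := 1) le_rfl
    (by norm_num [hw]) ?_
  refine strictCorner_of_subset (stage_antitone (by decide)) (Set.mem_univ w) ht hwt ?_
  rintro x ⟨⟨-, rfl | hxw⟩, hx2⟩
  · exact (hx2 hw2).elim
  · obtain rfl : x = a := not_not.mp ((mem_stage_two_iff_ne hu4 ha).not.mp hx2)
    exact (haw hxw).elim

lemma exists_not_strictCorner_forall_mem_closedNbhd [Finite V] (hu4 : cornerRank G u = 4)
    (ha : ∀ v, cornerRank G v = 1 ↔ v = a) :
    ∃ c ∈ stage G 2, ¬ StrictCorner G (stage G 2) c ∧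
      ∀ w, cornerRank G w = 2 → w ∈ closedNbhd G (stage G 2) c := by
  obtain ⟨-, b, -, hba, hab⟩ :=
    strictCorner_of_cornerRank_lt (n := 1) (by simpa using (ha a).mpr rfl) (by rw [hu4]; decide)
  obtain ⟨c, hc, hbc, hcnsc⟩ :=
    exists_closedNbhd_subset_not_strictCorner ((mem_stage_two_iff_ne hu4 ha).mpr hba)
  refine ⟨c, hc, hcnsc, fun w hw => hbc ⟨mem_stage_of_le_cornerRank (by simp [hw]), ?_⟩⟩
  exact (hab.subset ⟨Set.mem_univ w, Or.inr (adj_of_cornerRank_eq_two hu4 ha hw).symm⟩).2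

lemma exists_forall_mem_closedNbhd_closedNbhd [Finite V] (hu : ∀ v, cornerRank G v = 4 ↔ v = u)
    (hle : ∀ v, cornerRank G v ≤ 4) (ha : ∀ v, cornerRank G v = 1 ↔ v = a) {v₀ : V}
    (hv₀ : cornerRank G v₀ = 3) :
    ∃ c ∈ rankSet G 3, ∀ v ∈ rankSet G 3, ∃ t,
      v ∈ closedNbhd G (rankSet G 3) t ∧ t ∈ closedNbhd G (rankSet G 3) c := by
  have hu4 : cornerRank G u = 4 := (hu u).mpr rfl
  obtain ⟨c, hc2, hcnsc, hc⟩ := exists_not_strictCorner_forall_mem_closedNbhd hu4 ha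
  obtain ⟨w₀, hw₀, -, hw₀u⟩ := exists_adj_cornerRank_two_not_mem_closedNbhd hu hle hv₀
  refine ⟨c, cornerRank_eq_three_of_not_strictCorner hu hle hc2 hcnsc (hc w₀ hw₀) hw₀u,
    fun v (hv : cornerRank G v = 3) => ?_⟩
  obtain ⟨w, hw, hwv, hwu⟩ := exists_adj_cornerRank_two_not_mem_closedNbhd hu hle hv
  have hw2 : w ∈ stage G 2 := mem_stage_of_le_cornerRank (by simp [hw])
  have hv2 : v ∈ stage G 2 := mem_stage_of_le_cornerRank (by norm_num [hv])
  obtain ⟨t, ht2, hwt, htnsc⟩ := exists_closedNbhd_subset_not_strictCorner hw2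
  have ht3 := cornerRank_eq_three_of_not_strictCorner hu hle ht2 htnsc (hwt ⟨hw2, Or.inl rfl⟩) hwu
  have hct : c ∈ closedNbhd G (stage G 2) t := hwt ((mem_closedNbhd_comm hw2 hc2).mp (hc w hw))
  exact ⟨t, ⟨hv, (hwt ⟨hv2, Or.inr hwv.symm⟩).2⟩, ht3, ((mem_closedNbhd_comm hc2 ht2).mp hct).2⟩

end CopsRobbers

theorem CopsRobbers.rank3_connected_general
    {V : Type} [Fintype V] (G : SimpleGraph V) (m k : ℕ)
    (hm : 1 ≤ m) (h : CopsRobbers.Realizes G [1, m, k, 1]) :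
    (SimpleGraph.induce {v | CopsRobbers.cornerRank G v = 3} G).Connected := by
  obtain ⟨-, hrank, hcard⟩ := h
  have hle : ∀ v, cornerRank G v ≤ 4 :=
    fun v => (le_iSup (cornerRank G) v).trans_eq (by simpa [graphRank] using hrank)
  obtain ⟨u, hu⟩ := Set.ncard_eq_one.mp (by simpa using (hcard 0).symm)
  obtain ⟨a, ha⟩ := Set.ncard_eq_one.mp (by simpa using (hcard 3).symm)
  have hm3 : m = {v | cornerRank G v = 3}.ncard := by simpa using hcard 1
  obtain ⟨v₀, hv₀⟩ := Set.nonempty_of_ncard_ne_zero (hm3 ▸ (by omega : m ≠ 0))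
  obtain ⟨c, hc, hhub⟩ := exists_forall_mem_closedNbhd_closedNbhd
    (Set.ext_iff.mp hu) hle (Set.ext_iff.mp ha) hv₀
  exact induce_connected_of_forall_exists_mem_closedNbhd hc hhub

/-- if a cop-win graph realizes `(1, m, k, 1)`, then the subgraph induced
on the vertices of corner rank 3 is connected. -/
theorem CopsRobbers.rank3_connected
    {V : Type} [Fintype V] (G : SimpleGraph V) (m k : ℕ)
    (hm : 1 ≤ m) (hk : 1 ≤ k) (h : CopsRobbers.Realizes G [1, m, k, 1]) :
    (SimpleGraph.induce {v | CopsRobbers.cornerRank G v = 3} G).Connected :=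
  CopsRobbers.rank3_connected_general G m k hm h
end

section
/- For every k ≥ 1, the vector (1, 3, k, 1) is not realizable, and consequently the vector (1, 2, k, 1) is not realizable: no cop-win graph has either as its rank cardinality vector. -/
namespace CopsRobbers

section Aux

variable {V : Type*}

lemma self_mem_closedNbhd' {G : SimpleGraph V} {S : Set V} {v : V} (hv : v ∈ S) :
    v ∈ closedNbhd G S v := ⟨hv, Or.inl rfl⟩

lemma closedNbhd_inter' {G : SimpleGraph V} {S T : Set V} (hTS : T ⊆ S) (v : V) :
    closedNbhd G T v = closedNbhd G S v ∩ T := by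
  ext u
  constructor
  · rintro ⟨hu, h⟩; exact ⟨⟨hTS hu, h⟩, hu⟩
  · rintro ⟨⟨_, h⟩, hu⟩; exact ⟨hu, h⟩

lemma exists_noncorner_corners [Fintype V] {G : SimpleGraph V} {S : Set V} {v : V}
    (h : StrictCorner G S v) :
    ∃ w ∈ S, ¬ StrictCorner G S w ∧ closedNbhd G S v ⊂ closedNbhd G S w := by
  obtain ⟨hvS, w0, hw0S, _, hsub⟩ := h
  set T := {w | w ∈ S ∧ closedNbhd G S v ⊂ closedNbhd G S w} with hTdef
  obtain ⟨w, hwT, hmax⟩ := Set.exists_max_image T (fun w => (closedNbhd G S w).ncard)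
    (Set.toFinite T) ⟨w0, hw0S, hsub⟩
  refine ⟨w, hwT.1, ?_, hwT.2⟩
  rintro ⟨hwS, w', hw'S, hne, hsub'⟩
  have hT' : w' ∈ T := ⟨hw'S, hwT.2.trans hsub'⟩
  exact absurd (hmax w' hT') (not_le.mpr (Set.ncard_lt_ncard hsub' (Set.toFinite _)))

def RankProp (G : SimpleGraph V) (n : ℕ) (v : V) : Prop :=
  StrictCorner G (stage G n) v ∨ (G.IsClique (stage G n) ∧ v ∈ stage G n)

lemma cornerRank_le' {G : SimpleGraph V} {n : ℕ} {v : V} (h1 : 1 ≤ n) (h : RankProp G n v) :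
    cornerRank G v ≤ (n : ℕ∞) := sInf_le ⟨n, rfl, h1, h⟩

lemma rankProp_of_cornerRank_eq {G : SimpleGraph V} {n : ℕ} {v : V}
    (h : cornerRank G v = (n : ℕ∞)) : 1 ≤ n ∧ RankProp G n v := by
  classical
  set T := {m : ℕ | 1 ≤ m ∧ RankProp G m v} with hTdef
  have hset : {k : ℕ∞ | ∃ n : ℕ, k = (n : ℕ∞) ∧ 1 ≤ n ∧
      (StrictCorner G (stage G n) v ∨ (G.IsClique (stage G n) ∧ v ∈ stage G n))}
      = (fun m : ℕ => (m : ℕ∞)) '' T := by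
    ext q
    constructor
    · rintro ⟨n, rfl, h1, h2⟩; exact ⟨n, ⟨h1, h2⟩, rfl⟩
    · rintro ⟨n, ⟨h1, h2⟩, rfl⟩; exact ⟨n, rfl, h1, h2⟩
  have hcr : cornerRank G v = sInf ((fun m : ℕ => (m : ℕ∞)) '' T) := by
    rw [cornerRank, hset]
  rcases T.eq_empty_or_nonempty with hemp | hne
  · rw [hemp] at hcr
    simp at hcr
    rw [h] at hcr
    exact absurd hcr (WithTop.coe_ne_top)
  · have heq : sInf ((fun m : ℕ => (m : ℕ∞)) '' T) = ((sInf T : ℕ) : ℕ∞) := by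
      apply le_antisymm
      · exact sInf_le ⟨sInf T, Nat.sInf_mem hne, rfl⟩
      · apply le_sInf
        rintro q ⟨n, hn, rfl⟩
        simp only []
        exact_mod_cast Nat.sInf_le hn
    rw [heq] at hcr
    rw [h] at hcr
    have : n = sInf T := by exact_mod_cast hcr
    rw [this]
    exact Nat.sInf_mem hne

lemma not_realizes_1mk1 {V : Type*} [Fintype V] (G : SimpleGraph V) (m k : ℕ)
    (hm1 : 1 ≤ m) (hm3 : m ≤ 3) : ¬ Realizes G [1, m, k, 1] := by
  rintro ⟨hcw, hrank, hcount⟩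
  have hrank4 : graphRank G = ((4:ℕ) : ℕ∞) := by simpa using hrank
  have h4 : {v | cornerRank G v = (4 : ℕ∞)}.ncard = 1 := by
    have := hcount ⟨0, by norm_num⟩
    norm_num [List.get] at this
    exact this.symm
  have h3 : {v | cornerRank G v = (3 : ℕ∞)}.ncard = m := by
    have := hcount ⟨1, by norm_num⟩
    norm_num [List.get] at this
    exact this.symm
  have h2 : {v | cornerRank G v = (2 : ℕ∞)}.ncard = k := by
    have := hcount ⟨2, by norm_num⟩
    norm_num [List.get] at this
    exact this.symm
  have h1 : {v | cornerRank G v = (1 : ℕ∞)}.ncard = 1 := by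
    have := hcount ⟨3, by norm_num⟩
    norm_num [List.get] at this
    exact this.symm
  -- basic rank facts
  have hle4 : ∀ v, cornerRank G v ≤ ((4:ℕ) : ℕ∞) := by
    intro v
    calc cornerRank G v ≤ graphRank G := le_iSup (fun v => cornerRank G v) v
    _ = _ := hrank4
  have hrk : ∀ v, ∃ n : ℕ, 1 ≤ n ∧ n ≤ 4 ∧ cornerRank G v = (n : ℕ∞) := by
    intro v
    have hn : cornerRank G v = (((cornerRank G v).toNat : ℕ) : ℕ∞) :=
      (ENat.coe_toNat (hcw v)).symm
    refine ⟨(cornerRank G v).toNat, (rankProp_of_cornerRank_eq hn).1, ?_, hn⟩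
    have := hle4 v
    rw [hn] at this
    exact_mod_cast this
  -- the unique top and bottom vertices
  obtain ⟨a, ha⟩ := Set.ncard_eq_one.mp h4
  obtain ⟨z, hz⟩ := Set.ncard_eq_one.mp h1
  have hra : cornerRank G a = (4:ℕ∞) := by
    have : a ∈ ({a} : Set V) := rfl
    rw [← ha] at this
    exact this
  have hrz : cornerRank G z = (1:ℕ∞) := by
    have : z ∈ ({z} : Set V) := rfl
    rw [← hz] at this
    exact this
  -- stage unfoldings
  have hst1 : stage G 1 = Set.univ := rfl
  have hst2 : stage G 2 = stage G 1 \ {v | StrictCorner G (stage G 1) v} := rfl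
  have hst3 : stage G 3 = stage G 2 \ {v | StrictCorner G (stage G 2) v} := rfl
  -- level 1
  have hnc1 : ¬ G.IsClique (stage G 1) := by
    intro hcl
    have hle := cornerRank_le' le_rfl (Or.inr ⟨hcl, by rw [hst1]; exact Set.mem_univ a⟩)
    rw [hra] at hle
    have : (4:ℕ) ≤ 1 := by exact_mod_cast hle
    omega
  have hc1 : ∀ v, cornerRank G v = (1:ℕ∞) ↔ StrictCorner G (stage G 1) v := by
    intro v
    constructor
    · intro hv
      rcases (rankProp_of_cornerRank_eq (show cornerRank G v = ((1:ℕ):ℕ∞) by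
        rw [hv]; norm_num)).2 with h | h
      · exact h
      · exact absurd h.1 hnc1
    · intro hv
      obtain ⟨n, hn1, hn4, hvn⟩ := hrk v
      have hle : cornerRank G v ≤ ((1:ℕ):ℕ∞) := cornerRank_le' le_rfl (Or.inl hv)
      rw [hvn] at hle
      have hle' : n ≤ 1 := by exact_mod_cast hle
      have : n = 1 := le_antisymm hle' hn1
      rw [hvn, this]
      norm_num
  have hmem2 : ∀ v, v ∈ stage G 2 ↔ (2:ℕ∞) ≤ cornerRank G v := by
    intro v
    rw [hst2]
    simp only [Set.mem_diff, Set.mem_setOf_eq]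
    rw [← hc1 v]
    have htriv : v ∈ stage G 1 := by rw [hst1]; exact Set.mem_univ v
    obtain ⟨n, hn1, hn4, hvn⟩ := hrk v
    rw [hvn]
    constructor
    · rintro ⟨-, hne⟩
      have hn1' : n ≠ 1 := by
        intro h
        exact hne (by rw [h]; norm_num)
      exact_mod_cast (show (2:ℕ) ≤ n by omega)
    · intro hge
      refine ⟨htriv, fun heq => ?_⟩
      have e1 : n = 1 := by exact_mod_cast heq
      have e2 : (2:ℕ) ≤ n := by exact_mod_cast hge
      omega
  have ha2 : a ∈ stage G 2 := by
    rw [hmem2, hra]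
    exact_mod_cast (show (2:ℕ) ≤ 4 by omega)
  have hnc2 : ¬ G.IsClique (stage G 2) := by
    intro hcl
    have hle := cornerRank_le' (show (1:ℕ) ≤ 2 by omega) (Or.inr ⟨hcl, ha2⟩)
    rw [hra] at hle
    have : (4:ℕ) ≤ 2 := by exact_mod_cast hle
    omega
  have hc2 : ∀ v, cornerRank G v = (2:ℕ∞) ↔ StrictCorner G (stage G 2) v := by
    intro v
    constructor
    · intro hv
      rcases (rankProp_of_cornerRank_eq (show cornerRank G v = ((2:ℕ):ℕ∞) by
        rw [hv]; norm_num)).2 with h | h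
      · exact h
      · exact absurd h.1 hnc2
    · intro hv
      have hle : cornerRank G v ≤ ((2:ℕ):ℕ∞) := cornerRank_le' (by omega) (Or.inl hv)
      have hge : (2:ℕ∞) ≤ cornerRank G v := (hmem2 v).mp hv.1
      refine le_antisymm ?_ hge
      exact_mod_cast hle
  have hmem3 : ∀ v, v ∈ stage G 3 ↔ (3:ℕ∞) ≤ cornerRank G v := by
    intro v
    rw [hst3]
    simp only [Set.mem_diff, Set.mem_setOf_eq]
    rw [← hc2, hmem2]
    obtain ⟨n, hn1, hn4, hvn⟩ := hrk v
    rw [hvn]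
    constructor
    · rintro ⟨hge, hne⟩
      have h2n : (2:ℕ) ≤ n := by exact_mod_cast hge
      have hn2 : n ≠ 2 := by
        intro h
        exact hne (by rw [h]; norm_num)
      exact_mod_cast (show (3:ℕ) ≤ n by omega)
    · intro hge
      have h3n : (3:ℕ) ≤ n := by exact_mod_cast hge
      refine ⟨by exact_mod_cast (show (2:ℕ) ≤ n by omega), fun heq => ?_⟩
      have : n = 2 := by exact_mod_cast heq
      omega
  have ha3 : a ∈ stage G 3 := by
    rw [hmem3, hra]
    exact_mod_cast (show (3:ℕ) ≤ 4 by omega)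
  have hnc3 : ¬ G.IsClique (stage G 3) := by
    intro hcl
    have hle := cornerRank_le' (show (1:ℕ) ≤ 3 by omega) (Or.inr ⟨hcl, ha3⟩)
    rw [hra] at hle
    have : (4:ℕ) ≤ 3 := by exact_mod_cast hle
    omega
  have hc3 : ∀ v, cornerRank G v = (3:ℕ∞) ↔ StrictCorner G (stage G 3) v := by
    intro v
    constructor
    · intro hv
      rcases (rankProp_of_cornerRank_eq (show cornerRank G v = ((3:ℕ):ℕ∞) by
        rw [hv]; norm_num)).2 with h | h
      · exact h
      · exact absurd h.1 hnc3
    · intro hv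
      have hle : cornerRank G v ≤ ((3:ℕ):ℕ∞) := cornerRank_le' (by omega) (Or.inl hv)
      have hge : (3:ℕ∞) ≤ cornerRank G v := (hmem3 v).mp hv.1
      refine le_antisymm ?_ hge
      exact_mod_cast hle
  have hsub21 : stage G 2 ⊆ stage G 1 := by
    rw [hst1]
    exact fun v _ => Set.mem_univ v
  have hsub32 : stage G 3 ⊆ stage G 2 := by
    intro v hv
    rw [hmem2]
    refine le_trans ?_ ((hmem3 v).mp hv)
    exact_mod_cast (show (2:ℕ) ≤ 3 by omega)
  have hmem3' : ∀ v ∈ stage G 3, cornerRank G v = (3:ℕ∞) ∨ v = a := by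
    intro v hv
    obtain ⟨n, hn1, hn4, hvn⟩ := hrk v
    have h3n : (3:ℕ) ≤ n := by
      have := (hmem3 v).mp hv
      rw [hvn] at this
      exact_mod_cast this
    have : n = 3 ∨ n = 4 := by omega
    rcases this with rfl | rfl
    · left; rw [hvn]; norm_num
    · right
      have : v ∈ {u | cornerRank G u = (4:ℕ∞)} := by
        rw [Set.mem_setOf_eq, hvn]; norm_num
      rw [ha] at this
      exact this
  have hra3 : cornerRank G a ≠ (3:ℕ∞) := by
    rw [hra]
    intro h
    have : (4:ℕ) = 3 := by exact_mod_cast h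
    omega
  have hcornA : ∀ v, cornerRank G v = (3:ℕ∞) →
      closedNbhd G (stage G 3) v ⊂ closedNbhd G (stage G 3) a := by
    intro v hv
    obtain ⟨w, hwS, hwnc, hsub⟩ := exists_noncorner_corners ((hc3 v).mp hv)
    have hwa : w = a := by
      rcases hmem3' w hwS with h | h
      · exact absurd ((hc3 w).mp h) hwnc
      · exact h
    rwa [hwa] at hsub
  have hN3a : closedNbhd G (stage G 3) a = stage G 3 := by
    apply Set.Subset.antisymm (fun u hu => hu.1)
    intro v hv
    rcases hmem3' v hv with h | h
    · exact (hcornA v h).1 (self_mem_closedNbhd' hv)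
    · rw [h]; exact self_mem_closedNbhd' ha3
  -- Fact 2: each rank-3 vertex has a rank-2 neighbor not adjacent to a
  have hp : ∀ v, cornerRank G v = (3:ℕ∞) →
      ∃ p, cornerRank G p = (2:ℕ∞) ∧ G.Adj p v ∧ p ≠ a ∧ ¬ G.Adj p a := by
    intro v hv
    have hv3 : v ∈ stage G 3 := by
      rw [hmem3, hv]
    have hv2 : v ∈ stage G 2 := hsub32 hv3
    have hvna : v ≠ a := by
      intro h
      exact hra3 (h ▸ hv)
    have hnotc : ¬ StrictCorner G (stage G 2) v := by
      intro h
      have h' := (hc2 v).mpr h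
      rw [hv] at h'
      have : (3:ℕ) = 2 := by exact_mod_cast h'
      omega
    have hnsub : ¬ (closedNbhd G (stage G 2) v ⊂ closedNbhd G (stage G 2) a) := by
      intro hss
      exact hnotc ⟨hv2, a, ha2, fun h => hvna h.symm, hss⟩
    have hint : ∀ x, closedNbhd G (stage G 3) x = closedNbhd G (stage G 2) x ∩ stage G 3 :=
      fun x => closedNbhd_inter' hsub32 x
    have hne : ¬ (closedNbhd G (stage G 2) v ⊆ closedNbhd G (stage G 2) a) := by
      intro hsubs
      by_cases heq : closedNbhd G (stage G 2) v = closedNbhd G (stage G 2) a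
      · have hss := hcornA v hv
        rw [hint v, hint a, heq] at hss
        exact ssubset_irrefl _ hss
      · exact hnsub (Set.ssubset_iff_subset_ne.mpr ⟨hsubs, heq⟩)
    obtain ⟨p, hpv, hpa⟩ := Set.not_subset.mp hne
    have hp2 : p ∈ stage G 2 := hpv.1
    have hpna : p ≠ a := by
      intro h
      exact hpa (by rw [h]; exact self_mem_closedNbhd' ha2)
    have hpnadj : ¬ G.Adj p a := by
      intro h
      exact hpa ⟨hp2, Or.inr h⟩
    have hp3 : p ∉ stage G 3 := by
      intro h3
      have : p ∈ closedNbhd G (stage G 3) a := by rw [hN3a]; exact h3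
      rw [hint a] at this
      exact hpa this.1
    have hpr : cornerRank G p = (2:ℕ∞) := by
      obtain ⟨n, hn1, hn4, hpn⟩ := hrk p
      have h2n : (2:ℕ) ≤ n := by
        have := (hmem2 p).mp hp2
        rw [hpn] at this
        exact_mod_cast this
      have h3n : ¬ (3:ℕ) ≤ n := by
        intro h
        exact hp3 ((hmem3 p).mpr (by rw [hpn]; exact_mod_cast h))
      have : n = 2 := by omega
      rw [hpn, this]
      norm_num
    have hadj : G.Adj p v := by
      rcases hpv.2 with h | h
      · exfalso
        rw [h] at hpr
        rw [hpr] at hv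
        have : (2:ℕ) = 3 := by exact_mod_cast hv
        omega
      · exact h
    exact ⟨p, hpr, hadj, hpna, hpnadj⟩
  -- stage 2 is everything but z
  have hmem2z : ∀ v, v ∈ stage G 2 ↔ v ≠ z := by
    intro v
    rw [hmem2]
    obtain ⟨n, hn1, hn4, hvn⟩ := hrk v
    constructor
    · intro hge h
      subst h
      rw [hrz] at hge
      have : (2:ℕ) ≤ 1 := by exact_mod_cast hge
      omega
    · intro hne
      have hn1' : n ≠ 1 := by
        intro h
        apply hne
        have : v ∈ {u | cornerRank G u = (1:ℕ∞)} := by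
          rw [Set.mem_setOf_eq, hvn, h]; norm_num
        rw [hz] at this
        exact this
      rw [hvn]
      exact_mod_cast (show (2:ℕ) ≤ n by omega)
  -- Fact 1: rank-2 vertices are adjacent to z and cornered by a stage-3 vertex not adjacent to z
  have hw2 : ∀ u, cornerRank G u = (2:ℕ∞) →
      G.Adj u z ∧ ∃ w, w ∈ stage G 3 ∧
        closedNbhd G (stage G 2) u ⊂ closedNbhd G (stage G 2) w ∧
        z ∉ closedNbhd G (stage G 1) w := by
    intro u hu
    have hcor : StrictCorner G (stage G 2) u := (hc2 u).mp hu
    obtain ⟨w, hwS2, hwnc, hsub⟩ := exists_noncorner_corners hcor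
    have hw3 : w ∈ stage G 3 := by
      obtain ⟨n, hn1, hn4, hwn⟩ := hrk w
      have h2n : (2:ℕ) ≤ n := by
        have := (hmem2 w).mp hwS2
        rw [hwn] at this
        exact_mod_cast this
      have hn2 : n ≠ 2 := by
        intro h
        exact hwnc ((hc2 w).mp (by rw [hwn, h]; norm_num))
      exact (hmem3 w).mpr (by rw [hwn]; exact_mod_cast (show (3:ℕ) ≤ n by omega))
    have hwu : w ≠ u := by
      intro h
      rw [h] at hsub
      exact ssubset_irrefl _ hsub
    have hnotc1 : ¬ StrictCorner G (stage G 1) u := by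
      intro h
      have h' := (hc1 u).mpr h
      rw [hu] at h'
      have : (2:ℕ) = 1 := by exact_mod_cast h'
      omega
    have hnsub1 : ¬ (closedNbhd G (stage G 1) u ⊂ closedNbhd G (stage G 1) w) := by
      intro hss
      exact hnotc1 ⟨by rw [hst1]; exact Set.mem_univ u, w,
        by rw [hst1]; exact Set.mem_univ w, hwu, hss⟩
    have hint : ∀ x, closedNbhd G (stage G 2) x = closedNbhd G (stage G 1) x ∩ stage G 2 :=
      fun x => closedNbhd_inter' hsub21 x
    have hNne : closedNbhd G (stage G 1) u ≠ closedNbhd G (stage G 1) w := by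
      intro heq
      have : closedNbhd G (stage G 2) u = closedNbhd G (stage G 2) w := by
        rw [hint u, hint w, heq]
      exact hsub.ne this
    have hz1 : z ∈ closedNbhd G (stage G 1) u := by
      by_contra hzn
      apply hnsub1
      apply Set.ssubset_iff_subset_ne.mpr
      refine ⟨?_, hNne⟩
      intro q hq
      have hq2 : q ∈ stage G 2 := (hmem2z q).mpr (fun h => hzn (h ▸ hq))
      have hquN : q ∈ closedNbhd G (stage G 2) u := by
        rw [hint u]; exact ⟨hq, hq2⟩
      have := hsub.1 hquN
      rw [hint w] at this
      exact this.1
    have hz1w : z ∉ closedNbhd G (stage G 1) w := by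
      intro hzw
      apply hnsub1
      apply Set.ssubset_iff_subset_ne.mpr
      refine ⟨?_, hNne⟩
      intro q hq
      by_cases hqz : q = z
      · rwa [hqz]
      · have hq2 : q ∈ stage G 2 := (hmem2z q).mpr hqz
        have hquN : q ∈ closedNbhd G (stage G 2) u := by
          rw [hint u]; exact ⟨hq, hq2⟩
        have := hsub.1 hquN
        rw [hint w] at this
        exact this.1
    have hadj : G.Adj u z := by
      rcases hz1.2 with h | h
      · exfalso
        rw [← h] at hu
        rw [hrz] at hu
        have : (1:ℕ) = 2 := by exact_mod_cast hu
        omega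
      · exact h.symm
    exact ⟨hadj, w, hw3, hsub, hz1w⟩
  -- Fact 3: the vertex y cornering z, and the vertex t
  have hcz : StrictCorner G (stage G 1) z := (hc1 z).mp hrz
  obtain ⟨-, y, -, hyz, hysub⟩ := hcz
  have ht : ∃ t ∈ stage G 3, ∀ u, cornerRank G u = (2:ℕ∞) → G.Adj u t := by
    by_cases hy3 : y ∈ stage G 3
    · refine ⟨y, hy3, fun u hu => ?_⟩
      have hne : u ≠ y := by
        intro h
        have := (hmem3 y).mp hy3
        rw [← h, hu] at this
        have : (3:ℕ) ≤ 2 := by exact_mod_cast this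
        omega
      have huz : G.Adj u z := (hw2 u hu).1
      have huNz : u ∈ closedNbhd G (stage G 1) z := by
        refine ⟨by rw [hst1]; exact Set.mem_univ u, Or.inr huz⟩
      have := hysub.1 huNz
      rcases this.2 with h | h
      · exact absurd h hne
      · exact h
    · have hry : cornerRank G y = (2:ℕ∞) := by
        obtain ⟨n, hn1, hn4, hyn⟩ := hrk y
        have h2n : (2:ℕ) ≤ n := by
          have := (hmem2 y).mp ((hmem2z y).mpr hyz)
          rw [hyn] at this
          exact_mod_cast this
        have h3n : ¬ (3:ℕ) ≤ n := by
          intro h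
          exact hy3 ((hmem3 y).mpr (by rw [hyn]; exact_mod_cast h))
        have : n = 2 := by omega
        rw [hyn, this]
        norm_num
      obtain ⟨hyzadj, w, hw3, hsubw, -⟩ := hw2 y hry
      refine ⟨w, hw3, fun u hu => ?_⟩
      have huw_ne : u ≠ w := by
        intro h
        have := (hmem3 w).mp hw3
        rw [← h, hu] at this
        have : (3:ℕ) ≤ 2 := by exact_mod_cast this
        omega
      have hu2 : u ∈ stage G 2 := by
        rw [hmem2, hu]
      have huNy : u ∈ closedNbhd G (stage G 2) y := by
        refine ⟨hu2, ?_⟩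
        by_cases h : u = y
        · exact Or.inl h
        · have huz : G.Adj u z := (hw2 u hu).1
          have huNz : u ∈ closedNbhd G (stage G 1) z := by
            refine ⟨by rw [hst1]; exact Set.mem_univ u, Or.inr huz⟩
          have := hysub.1 huNz
          rcases this.2 with h' | h'
          · exact absurd h' h
          · exact Or.inr h'
      have := hsubw.1 huNy
      rcases this.2 with h | h
      · exact absurd h huw_ne
      · exact h
  obtain ⟨t, ht3, hta⟩ := ht
  -- t has rank 3
  have hX3ne : {v | cornerRank G v = (3:ℕ∞)}.Nonempty := by
    apply Set.nonempty_of_ncard_ne_zero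
    rw [h3]
    omega
  obtain ⟨v0, hv0⟩ := hX3ne
  obtain ⟨p0, hp0r, hp0adj, hp0a, hp0na⟩ := hp v0 hv0
  have htna : t ≠ a := by
    intro h
    exact hp0na (by rw [← h]; exact hta p0 hp0r)
  have hrt : cornerRank G t = (3:ℕ∞) := by
    rcases hmem3' t ht3 with h | h
    · exact h
    · exact absurd h htna
  -- every rank-3 vertex has a rank-3 non-neighbor
  have hgetS : ∀ x, cornerRank G x = (3:ℕ∞) →
      ∃ s, cornerRank G s = (3:ℕ∞) ∧ s ≠ x ∧ ¬ G.Adj s x := by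
    intro x hx
    have hx3 : x ∈ stage G 3 := by rw [hmem3, hx]
    have hss := hcornA x hx
    obtain ⟨s, hsmem, hsN⟩ := Set.exists_of_ssubset hss
    have hs3' : s ∈ stage G 3 := hsmem.1
    have hsnx : s ≠ x := by
      intro h
      exact hsN ⟨hs3', Or.inl h⟩
    have hsnadj : ¬ G.Adj s x := by
      intro h
      exact hsN ⟨hs3', Or.inr h⟩
    have hsa : s ≠ a := by
      intro h
      apply hsN
      rw [h]
      have hxa : x ∈ closedNbhd G (stage G 3) a := by rw [hN3a]; exact hx3
      rcases hxa.2 with h' | h'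
      · exact absurd (h' ▸ hx) hra3
      · exact ⟨ha3, Or.inr h'.symm⟩
    have hsr : cornerRank G s = (3:ℕ∞) := by
      rcases hmem3' s hs3' with h | h
      · exact h
      · exact absurd h hsa
    exact ⟨s, hsr, hsnx, hsnadj⟩
  obtain ⟨s, hrs, hst, hsnadj⟩ := hgetS t hrt
  obtain ⟨ps, hpsr, hpss, hpsa, hpsna⟩ := hp s hrs
  obtain ⟨-, w, hw3, hsubw, -⟩ := hw2 ps hpsr
  have hs3 : s ∈ stage G 3 := by rw [hmem3, hrs]
  have hs2 : s ∈ stage G 2 := hsub32 hs3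
  have ht2 : t ∈ stage G 2 := hsub32 ht3
  have hps2 : ps ∈ stage G 2 := by rw [hmem2, hpsr]
  have hsW : s ∈ closedNbhd G (stage G 2) w := hsubw.1 ⟨hs2, Or.inr hpss.symm⟩
  have htW : t ∈ closedNbhd G (stage G 2) w := hsubw.1 ⟨ht2, Or.inr (hta ps hpsr).symm⟩
  have hpsW : ps ∈ closedNbhd G (stage G 2) w := hsubw.1 (self_mem_closedNbhd' hps2)
  have hwa : w ≠ a := by
    intro h
    rw [h] at hpsW
    rcases hpsW.2 with h' | h'
    · exact hpsa h'
    · exact hpsna h'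
  have hrw : cornerRank G w = (3:ℕ∞) := by
    rcases hmem3' w hw3 with h | h
    · exact h
    · exact absurd h hwa
  have hws : w ≠ s := by
    intro h
    rw [h] at htW
    rcases htW.2 with h' | h'
    · exact hst h'.symm
    · exact hsnadj h'.symm
  have hwt : w ≠ t := by
    intro h
    rw [h] at hsW
    rcases hsW.2 with h' | h'
    · exact hst h'
    · exact hsnadj h'
  have hadjsw : G.Adj s w := by
    rcases hsW.2 with h | h
    · exact absurd h.symm hws
    · exact h
  have hadjtw : G.Adj t w := by
    rcases htW.2 with h | h
    · exact absurd h.symm hwt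
    · exact h
  obtain ⟨s', hrs', hs'w, hs'nadj⟩ := hgetS w hrw
  have hs's : s' ≠ s := by
    intro h
    exact hs'nadj (h ▸ hadjsw)
  have hs't : s' ≠ t := by
    intro h
    exact hs'nadj (h ▸ hadjtw)
  -- four distinct rank-3 vertices, but |X_3| = m ≤ 3
  have hsub4 : ({s', w, s, t} : Set V) ⊆ {v | cornerRank G v = (3:ℕ∞)} := by
    intro q hq
    rcases hq with rfl | rfl | rfl | rfl
    · exact hrs'
    · exact hrw
    · exact hrs
    · exact hrt
  have hcard : ({s', w, s, t} : Set V).ncard = 4 := by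
    rw [Set.ncard_insert_of_notMem (by simp [hs'w, hs's, hs't]),
      Set.ncard_insert_of_notMem (by simp [hws, hwt]), Set.ncard_pair hst]
  have hle := Set.ncard_le_ncard hsub4 (Set.toFinite _)
  rw [hcard, h3] at hle
  omega

end Aux

end CopsRobbers

/-- for every `k ≥ 1`, the vector `(1, 3, k, 1)` is not realizable, and
consequently the vector `(1, 2, k, 1)` is not realizable. -/
theorem CopsRobbers.not_realizable_13k1_12k1 (k : ℕ) (hk : 1 ≤ k) :
    ¬ CopsRobbers.Realizable [1, 3, k, 1] ∧ ¬ CopsRobbers.Realizable [1, 2, k, 1] := by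
  constructor
  · rintro ⟨W, FW, G, hG⟩
    exact @CopsRobbers.not_realizes_1mk1 W FW G 3 k (by norm_num) (by norm_num) hG
  · rintro ⟨W, FW, G, hG⟩
    exact @CopsRobbers.not_realizes_1mk1 W FW G 2 k (by norm_num) (by norm_num) hG
end
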